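/- Let f, g, h be smooth compactly supported functions on ℝ³₊, and let i, j, k be pairwise distinct indices in {1,2,3}. Then ∫_{ℝ³₊} |f g h| dx ≲ ‖f‖_{L²} ‖g‖_{L²}^{1/2} ‖∂ᵢg‖_{L²}^{1/2} ‖h‖_{L²}^{1/4} ‖∂ⱼh‖_{L²}^{1/4} ‖∂ₖh‖_{L²}^{1/4} ‖∂ⱼ∂ₖh‖_{L²}^{1/4}. -/

import Mathlib

open MeasureTheory
set_option maxHeartbeats 1000000

def H3 : Set (Fin 3 → ℝ) := {x | 0 < x 2}

noncomputable def pd (i : Fin 3) (f : (Fin 3 → ℝ) → ℝ) : (Fin 3 → ℝ) → ℝ :=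
  fun x => fderiv ℝ f x (Pi.single i 1)

noncomputable def L2 (f : (Fin 3 → ℝ) → ℝ) : ℝ :=
  Real.sqrt (∫ x in H3, (f x) ^ 2)

namespace AnisoAux

open Set Function ENNReal

noncomputable def SS (l : Fin 3) : Set ℝ := if l = 2 then Set.Ioi (0:ℝ) else Set.univ

lemma measurableSet_SS (l : Fin 3) : MeasurableSet (SS l) := by
  unfold SS; split <;> measurability

noncomputable def mu (l : Fin 3) : Measure ℝ := volume.restrict (SS l)

instance (l : Fin 3) : SigmaFinite (mu l) := by unfold mu; infer_instance

noncomputable def nu : Measure (Fin 3 → ℝ) := Measure.pi mu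

lemma H3_eq : H3 = Set.univ.pi SS := by
  ext x
  simp only [H3, Set.mem_setOf_eq, Set.mem_pi, Set.mem_univ, forall_true_left, SS]
  constructor
  · intro hx l
    by_cases h : l = 2 <;> simp [h, hx]
  · intro hx
    have := hx 2
    simpa using this

lemma nu_eq : volume.restrict H3 = nu := by
  symm
  unfold nu
  refine Measure.pi_eq (fun s hs => ?_)
  rw [Measure.restrict_apply (MeasurableSet.univ_pi hs)]
  have : Set.univ.pi s ∩ H3 = Set.univ.pi (fun l => s l ∩ SS l) := by
    rw [H3_eq, ← Set.pi_inter_distrib]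
  rw [this, volume_pi_pi]
  refine Finset.prod_congr rfl ?_
  intro l _
  rw [mu, Measure.restrict_apply (hs l)]

/-- pd of a smooth function is smooth. -/
lemma pd_contDiff {v : (Fin 3 → ℝ) → ℝ} (hv : ContDiff ℝ (⊤ : ℕ∞) v) (l : Fin 3) :
    ContDiff ℝ (⊤ : ℕ∞) (pd l v) := by
  have h1 : ContDiff ℝ (⊤ : ℕ∞) (fderiv ℝ v) := hv.fderiv_right (by simp)
  exact h1.clm_apply contDiff_const

lemma pd_continuous {v : (Fin 3 → ℝ) → ℝ} (hv : ContDiff ℝ (⊤ : ℕ∞) v) (l : Fin 3) :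
    Continuous (pd l v) := (pd_contDiff hv l).continuous

lemma pd_hasCompactSupport {v : (Fin 3 → ℝ) → ℝ} (hcs : HasCompactSupport v) (l : Fin 3) :
    HasCompactSupport (pd l v) := hcs.fderiv_apply ℝ _

/-- symmetry of second derivatives -/
lemma pd_comm {v : (Fin 3 → ℝ) → ℝ} (hv : ContDiff ℝ (⊤ : ℕ∞) v) (a b : Fin 3) :
    pd a (pd b v) = pd b (pd a v) := by
  funext x
  have hdv : Differentiable ℝ v := hv.differentiable (by simp)
  have hdv2 : Differentiable ℝ (fderiv ℝ v) :=
    (hv.fderiv_right (by simp : ((⊤ : ℕ∞) : WithTop ℕ∞) + 1 ≤ ((⊤ : ℕ∞) : WithTop ℕ∞))).differentiable (by simp)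
  have key : ∀ (w z : Fin 3 → ℝ),
      fderiv ℝ (fun y => fderiv ℝ v y w) x z = (fderiv ℝ (fderiv ℝ v) x z) w := by
    intro w z
    have h1 := fderiv_clm_apply (𝕜 := ℝ) (c := fderiv ℝ v) (u := fun _ => w) (x := x)
      (hdv2.differentiableAt) (differentiableAt_const w)
    rw [show (fun y => fderiv ℝ v y w) = (fun y => (fderiv ℝ v y) ((fun _ => w) y)) from rfl, h1]
    simp
  have hsymm := second_derivative_symmetric (f := v) (f' := fderiv ℝ v)
    (f'' := fderiv ℝ (fderiv ℝ v) x) (x := x)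
    (fun y => (hdv y).hasFDerivAt) (hdv2.differentiableAt.hasFDerivAt)
  show fderiv ℝ (pd b v) x (Pi.single a 1) = fderiv ℝ (pd a v) x (Pi.single b 1)
  rw [show pd b v = fun y => fderiv ℝ v y (Pi.single b 1) from rfl,
    show pd a v = fun y => fderiv ℝ v y (Pi.single a 1) from rfl, key, key, hsymm]


/-- the slice function has compact support -/
lemma slice_hasCompactSupport {v : (Fin 3 → ℝ) → ℝ} (hcs : HasCompactSupport v)
    (l : Fin 3) (x : Fin 3 → ℝ) :
    HasCompactSupport (fun s => v (Function.update x l s)) := by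
  obtain ⟨r, hr⟩ : ∃ r : ℝ, tsupport v ⊆ Metric.closedBall 0 r :=
    hcs.isBounded.subset_closedBall 0
  apply HasCompactSupport.intro (K := Metric.closedBall (0:ℝ) r) (isCompact_closedBall 0 r)
  intro s hs
  by_contra hvs
  have hmem : Function.update x l s ∈ tsupport v :=
    subset_closure (by simpa [Function.mem_support] using hvs)
  have := hr hmem
  rw [Metric.mem_closedBall, dist_zero_right] at this
  have hls : |s| ≤ ‖Function.update x l s‖ := by
    have := norm_le_pi_norm (Function.update x l s) l
    simpa using this
  apply hs
  rw [Metric.mem_closedBall, dist_zero_right]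
  calc ‖s‖ = |s| := rfl
  _ ≤ ‖Function.update x l s‖ := hls
  _ ≤ r := this

lemma slice_hasDerivAt {v : (Fin 3 → ℝ) → ℝ} (hv : ContDiff ℝ (⊤ : ℕ∞) v)
    (l : Fin 3) (x : Fin 3 → ℝ) (s : ℝ) :
    HasDerivAt (fun s => v (Function.update x l s)) (pd l v (Function.update x l s)) s := by
  have hA : (fun t : ℝ => Function.update x l t)
      = (fun t : ℝ => x + (t - x l) • (Pi.single l 1 : Fin 3 → ℝ)) := by
    funext t
    funext m
    by_cases hm : m = l
    · subst hm; simp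
    · simp [Function.update_apply, hm, Pi.single_apply, Ne.symm hm]
  have h1 : HasDerivAt (fun t : ℝ => t - x l) 1 s := (hasDerivAt_id s).sub_const _
  have h2 : HasDerivAt (fun t : ℝ => (t - x l) • (Pi.single l 1 : Fin 3 → ℝ))
      ((1:ℝ) • (Pi.single l 1 : Fin 3 → ℝ)) s := h1.smul_const _
  have h3 := h2.const_add x
  rw [one_smul] at h3
  have hAd : HasDerivAt (fun t : ℝ => Function.update x l t) (Pi.single l 1 : Fin 3 → ℝ) s := by
    rw [hA]; exact h3
  have hvd : HasFDerivAt v (fderiv ℝ v (Function.update x l s)) (Function.update x l s) :=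
    ((hv.differentiable (by simp)) _).hasFDerivAt
  exact hvd.comp_hasDerivAt s hAd

/-- 1D Agmon-type bound, ENNReal form. -/
lemma agmon1 {v : (Fin 3 → ℝ) → ℝ} (hv : ContDiff ℝ (⊤ : ℕ∞) v) (hcs : HasCompactSupport v)
    (l : Fin 3) (x : Fin 3 → ℝ) (hx : x l ∈ SS l) :
    ENNReal.ofReal |v x| ^ (2:ℝ) ≤
      ∫⁻ s, 2 * ENNReal.ofReal |v (Function.update x l s)|
        * ENNReal.ofReal |pd l v (Function.update x l s)| ∂(mu l) := by
  set u : ℝ → ℝ := fun s => v (Function.update x l s) with hu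
  set u' : ℝ → ℝ := fun s => pd l v (Function.update x l s) with hu'
  have hderiv : ∀ s : ℝ, HasDerivAt u (u' s) s := fun s => slice_hasDerivAt hv l x s
  have hupd : Continuous (Function.update x l) := continuous_const.update l continuous_id
  have hucont : Continuous u := hv.continuous.comp hupd
  have hu'cont : Continuous u' := (pd_continuous hv l).comp hupd
  have hucs : HasCompactSupport u := slice_hasCompactSupport hcs l x
  set w : ℝ → ℝ := fun s => 2 * u s * u' s with hw
  have hwcont : Continuous w := by fun_prop
  have hwcs : HasCompactSupport w := by
    have h1 : HasCompactSupport (fun s => u s * u' s) := hucs.mul_right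
    have h2 : HasCompactSupport (fun s => (2:ℝ) * (u s * u' s)) :=
      HasCompactSupport.mul_left (f := fun _ : ℝ => (2:ℝ)) h1
    have : w = fun s => (2:ℝ) * (u s * u' s) := by funext s; rw [hw]; ring
    rw [this]
    exact h2
  have hwint : Integrable w volume := hwcont.integrable_of_hasCompactSupport hwcs
  have habsint : Integrable (fun s => |w s|) volume := hwint.abs
  -- derivative of u^2
  have hsq : ∀ s : ℝ, HasDerivAt (fun t => u t ^ 2) (w s) s := by
    intro s
    have := (hderiv s).fun_pow 2
    simpa [hw, mul_comm, mul_assoc, mul_left_comm] using this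
  -- tendsto 0
  have htend : Filter.Tendsto (fun t => u t ^ 2) Filter.atTop (nhds 0) := by
    obtain ⟨r, hr⟩ : ∃ r : ℝ, tsupport u ⊆ Metric.closedBall 0 r :=
      hucs.isBounded.subset_closedBall 0
    have hev : ∀ᶠ t in Filter.atTop, u t ^ 2 = 0 := by
      filter_upwards [Filter.eventually_ge_atTop (r + 1)] with t ht
      have : t ∉ tsupport u := by
        intro hmem
        have := hr hmem
        rw [Metric.mem_closedBall, dist_zero_right, Real.norm_eq_abs] at this
        have : t ≤ r := le_trans (le_abs_self t) this
        linarith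
      rw [image_eq_zero_of_notMem_tsupport this]
      ring
    exact Filter.Tendsto.congr' (by filter_upwards [hev] with t ht using ht.symm)
      tendsto_const_nhds
  set a : ℝ := x l with ha
  have hkey : ∫ s in Set.Ioi a, w s = 0 - u a ^ 2 :=
    integral_Ioi_of_hasDerivAt_of_tendsto' (fun s _ => hsq s) hwint.integrableOn htend
  -- real inequality
  have hIoiSS : Set.Ioi a ⊆ SS l := by
    intro t ht
    unfold SS
    split
    · rename_i h2
      have h0 : (0:ℝ) < a := by
        have := hx
        unfold SS at this
        rw [if_pos h2] at this
        exact this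
      exact Set.mem_Ioi.mpr (lt_trans h0 ht)
    · trivial
  have hreal : u a ^ 2 ≤ ∫ s in SS l, |w s| := by
    have h1 : u a ^ 2 = -∫ s in Set.Ioi a, w s := by rw [hkey]; ring
    have h2 : -∫ s in Set.Ioi a, w s ≤ |∫ s in Set.Ioi a, w s| := neg_le_abs _
    have h3 : |∫ s in Set.Ioi a, w s| ≤ ∫ s in Set.Ioi a, |w s| := by
      simpa [Real.norm_eq_abs] using
        norm_integral_le_integral_norm (μ := volume.restrict (Set.Ioi a)) w
    have h4 : ∫ s in Set.Ioi a, |w s| ≤ ∫ s in SS l, |w s| := by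
      apply setIntegral_mono_set habsint.integrableOn
      · filter_upwards with s using abs_nonneg _
      · exact HasSubset.Subset.eventuallyLE hIoiSS
    linarith
  -- pass to ENNReal
  have hofReal : ENNReal.ofReal (u a ^ 2) ≤ ENNReal.ofReal (∫ s in SS l, |w s|) :=
    ENNReal.ofReal_le_ofReal hreal
  have heq : ENNReal.ofReal (∫ s in SS l, |w s|) = ∫⁻ s in SS l, ENNReal.ofReal |w s| := by
    apply ofReal_integral_eq_lintegral_ofReal habsint.integrableOn
    filter_upwards with s using abs_nonneg _
  have hptwise : ∀ s : ℝ, ENNReal.ofReal |w s|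
      = 2 * ENNReal.ofReal |u s| * ENNReal.ofReal |u' s| := by
    intro s
    rw [hw]
    have : |2 * u s * u' s| = 2 * |u s| * |u' s| := by
      rw [abs_mul, abs_mul]
      norm_num
    rw [this, ENNReal.ofReal_mul (by positivity), ENNReal.ofReal_mul (by norm_num)]
    norm_num
  have hua : u a = v x := by
    show v (Function.update x l (x l)) = v x
    rw [Function.update_eq_self]
  have hlhs : ENNReal.ofReal |v x| ^ (2:ℝ) = ENNReal.ofReal (u a ^ 2) := by
    rw [ENNReal.ofReal_rpow_of_nonneg (abs_nonneg _) (by norm_num), hua]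
    congr 1
    rw [show (2:ℝ) = ((2:ℕ):ℝ) by norm_num, Real.rpow_natCast, sq_abs]
  rw [hlhs]
  calc ENNReal.ofReal (u a ^ 2) ≤ ∫⁻ s in SS l, ENNReal.ofReal |w s| := by rw [← heq]; exact hofReal
  _ = ∫⁻ s, 2 * ENNReal.ofReal |u s| * ENNReal.ofReal |u' s| ∂(mu l) := by
      unfold mu
      exact lintegral_congr (fun s => hptwise s)


section Holder

variable {α β : Type*} [MeasurableSpace α] [MeasurableSpace β]

lemma conj22 : Real.HolderConjugate 2 2 := Real.HolderConjugate.two_two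

lemma hold (m : Measure α) {F G : α → ℝ≥0∞} (hF : Measurable F) (hG : Measurable G) :
    ∫⁻ a, F a * G a ∂m ≤
      (∫⁻ a, F a ^ (2:ℝ) ∂m) ^ ((1:ℝ)/2) * (∫⁻ a, G a ^ (2:ℝ) ∂m) ^ ((1:ℝ)/2) := by
  simpa using ENNReal.lintegral_mul_le_Lp_mul_Lq m conj22 hF.aemeasurable hG.aemeasurable

lemma rpow_half_sq (a : ℝ≥0∞) : (a ^ ((1:ℝ)/2)) ^ (2:ℝ) = a := by
  rw [← ENNReal.rpow_mul]
  norm_num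

lemma hold_sqrt (m : Measure α) {A B : α → ℝ≥0∞} (hA : Measurable A) (hB : Measurable B) :
    ∫⁻ a, (A a) ^ ((1:ℝ)/2) * (B a) ^ ((1:ℝ)/2) ∂m ≤
      (∫⁻ a, A a ∂m) ^ ((1:ℝ)/2) * (∫⁻ a, B a ∂m) ^ ((1:ℝ)/2) := by
  have h := hold m (hA.pow_const ((1:ℝ)/2)) (hB.pow_const ((1:ℝ)/2))
  rw [lintegral_congr (fun a => rpow_half_sq (A a)),
    lintegral_congr (fun a => rpow_half_sq (B a))] at h
  exact h

lemma hold4 (m : Measure α) {A B C D : α → ℝ≥0∞} (hA : Measurable A) (hB : Measurable B)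
    (hC : Measurable C) (hD : Measurable D) :
    ∫⁻ a, (A a) ^ ((1:ℝ)/4) * (B a) ^ ((1:ℝ)/4) * (C a) ^ ((1:ℝ)/4) * (D a) ^ ((1:ℝ)/4) ∂m ≤
      (∫⁻ a, A a ∂m) ^ ((1:ℝ)/4) * (∫⁻ a, B a ∂m) ^ ((1:ℝ)/4)
        * (∫⁻ a, C a ∂m) ^ ((1:ℝ)/4) * (∫⁻ a, D a ∂m) ^ ((1:ℝ)/4) := by
  have hpt : ∀ a, (A a) ^ ((1:ℝ)/4) * (B a) ^ ((1:ℝ)/4) * (C a) ^ ((1:ℝ)/4) * (D a) ^ ((1:ℝ)/4)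
      = ((A a) ^ ((1:ℝ)/2) * (B a) ^ ((1:ℝ)/2)) ^ ((1:ℝ)/2)
        * ((C a) ^ ((1:ℝ)/2) * (D a) ^ ((1:ℝ)/2)) ^ ((1:ℝ)/2) := by
    intro a
    rw [ENNReal.mul_rpow_of_nonneg _ _ (by norm_num), ENNReal.mul_rpow_of_nonneg _ _ (by norm_num),
      ← ENNReal.rpow_mul, ← ENNReal.rpow_mul, ← ENNReal.rpow_mul, ← ENNReal.rpow_mul]
    norm_num
    ring
  calc ∫⁻ a, (A a) ^ ((1:ℝ)/4) * (B a) ^ ((1:ℝ)/4) * (C a) ^ ((1:ℝ)/4) * (D a) ^ ((1:ℝ)/4) ∂m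
      = ∫⁻ a, ((A a) ^ ((1:ℝ)/2) * (B a) ^ ((1:ℝ)/2)) ^ ((1:ℝ)/2)
        * ((C a) ^ ((1:ℝ)/2) * (D a) ^ ((1:ℝ)/2)) ^ ((1:ℝ)/2) ∂m := lintegral_congr hpt
    _ ≤ (∫⁻ a, (A a) ^ ((1:ℝ)/2) * (B a) ^ ((1:ℝ)/2) ∂m) ^ ((1:ℝ)/2)
        * (∫⁻ a, (C a) ^ ((1:ℝ)/2) * (D a) ^ ((1:ℝ)/2) ∂m) ^ ((1:ℝ)/2) :=
        hold_sqrt m ((hA.pow_const _).mul (hB.pow_const _)) ((hC.pow_const _).mul (hD.pow_const _))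
    _ ≤ (((∫⁻ a, A a ∂m) ^ ((1:ℝ)/2) * (∫⁻ a, B a ∂m) ^ ((1:ℝ)/2)) ^ ((1:ℝ)/2))
        * (((∫⁻ a, C a ∂m) ^ ((1:ℝ)/2) * (∫⁻ a, D a ∂m) ^ ((1:ℝ)/2)) ^ ((1:ℝ)/2)) := by
        gcongr
        · exact hold_sqrt m hA hB
        · exact hold_sqrt m hC hD
    _ = (∫⁻ a, A a ∂m) ^ ((1:ℝ)/4) * (∫⁻ a, B a ∂m) ^ ((1:ℝ)/4)
        * (∫⁻ a, C a ∂m) ^ ((1:ℝ)/4) * (∫⁻ a, D a ∂m) ^ ((1:ℝ)/4) := by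
        rw [ENNReal.mul_rpow_of_nonneg _ _ (by norm_num : (0:ℝ) ≤ 1/2),
          ENNReal.mul_rpow_of_nonneg _ _ (by norm_num : (0:ℝ) ≤ 1/2),
          ← ENNReal.rpow_mul, ← ENNReal.rpow_mul, ← ENNReal.rpow_mul, ← ENNReal.rpow_mul]
        norm_num
        ring

lemma hold_iter (m1 : Measure α) (m2 : Measure β) [SFinite m2] {A B : α → β → ℝ≥0∞}
    (hA : Measurable (fun p : α × β => A p.1 p.2)) (hB : Measurable (fun p : α × β => B p.1 p.2)) :
    ∫⁻ s, ∫⁻ r, A s r * B s r ∂m2 ∂m1 ≤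
      (∫⁻ s, ∫⁻ r, A s r ^ (2:ℝ) ∂m2 ∂m1) ^ ((1:ℝ)/2)
        * (∫⁻ s, ∫⁻ r, B s r ^ (2:ℝ) ∂m2 ∂m1) ^ ((1:ℝ)/2) := by
  have hAs : ∀ s, Measurable (A s) := fun s => hA.comp (measurable_prodMk_left)
  have hBs : ∀ s, Measurable (B s) := fun s => hB.comp (measurable_prodMk_left)
  have step1 : ∫⁻ s, ∫⁻ r, A s r * B s r ∂m2 ∂m1 ≤
      ∫⁻ s, (∫⁻ r, A s r ^ (2:ℝ) ∂m2) ^ ((1:ℝ)/2) * (∫⁻ r, B s r ^ (2:ℝ) ∂m2) ^ ((1:ℝ)/2) ∂m1 :=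
    lintegral_mono (fun s => hold m2 (hAs s) (hBs s))
  have hIA : Measurable (fun s => ∫⁻ r, A s r ^ (2:ℝ) ∂m2) :=
    Measurable.lintegral_prod_right' (hA.pow_const _)
  have hIB : Measurable (fun s => ∫⁻ r, B s r ^ (2:ℝ) ∂m2) :=
    Measurable.lintegral_prod_right' (hB.pow_const _)
  exact le_trans step1 (hold_sqrt m1 hIA hIB)

end Holder

section Xsec

variable {i j k : Fin 3}

lemma fin3_cover {i j k : Fin 3} (hij : i ≠ j) (hjk : j ≠ k) (hik : i ≠ k) (m : Fin 3) :
    m = i ∨ m = j ∨ m = k := by omega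

/-- point with coordinates t, s, r at positions i, j, k -/
def X (i j k : Fin 3) (t s r : ℝ) : Fin 3 → ℝ :=
  fun m => if m = j then s else if m = k then r else t

lemma X_apply_i (hij : i ≠ j) (hik : i ≠ k) (t s r : ℝ) : X i j k t s r i = t := by
  simp [X, hij, hik]

lemma X_apply_j (hjk : j ≠ k) (t s r : ℝ) : X i j k t s r j = s := by simp [X]

lemma X_apply_k (hjk : j ≠ k) (t s r : ℝ) : X i j k t s r k = r := by simp [X, Ne.symm hjk]

lemma upd3_eq (hij : i ≠ j) (hjk : j ≠ k) (hik : i ≠ k) (z : Fin 3 → ℝ) (t s r : ℝ) :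
    Function.update (Function.update (Function.update z i t) j s) k r = X i j k t s r := by
  funext m
  rcases fin3_cover hij hjk hik m with rfl | rfl | rfl <;>
    simp [X, Function.update_apply, hij, hjk, hik, Ne.symm hij, Ne.symm hjk, Ne.symm hik]

lemma Xperm (hij : i ≠ j) (hjk : j ≠ k) (hik : i ≠ k) (t s r : ℝ) :
    X j k i s r t = X i j k t s r := by
  funext m
  rcases fin3_cover hij hjk hik m with rfl | rfl | rfl <;>
    simp [X, hij, hjk, hik, Ne.symm hij, Ne.symm hjk, Ne.symm hik]

lemma updX_i (hij : i ≠ j) (hjk : j ≠ k) (hik : i ≠ k) (t t' s r : ℝ) :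
    Function.update (X i j k t s r) i t' = X i j k t' s r := by
  funext m
  rcases fin3_cover hij hjk hik m with rfl | rfl | rfl <;>
    simp [X, Function.update_apply, hij, hjk, hik, Ne.symm hij, Ne.symm hjk, Ne.symm hik]

lemma updX_jk (hij : i ≠ j) (hjk : j ≠ k) (hik : i ≠ k) (t s s' r r' : ℝ) :
    Function.update (Function.update (X i j k t s r) j s') k r' = X i j k t s' r' := by
  funext m
  rcases fin3_cover hij hjk hik m with rfl | rfl | rfl <;>
    simp [X, Function.update_apply, hij, hjk, hik, Ne.symm hij, Ne.symm hjk, Ne.symm hik]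

lemma measurable_X (i j k : Fin 3) :
    Measurable (fun p : ℝ × ℝ × ℝ => X i j k p.1 p.2.1 p.2.2) := by
  apply measurable_pi_lambda
  intro m
  simp only [X]
  by_cases hj : m = j
  · subst hj; simpa using measurable_snd.fst
  · by_cases hk : m = k
    · subst hk; simpa [hj] using measurable_snd.snd
    · simpa [hj, hk] using measurable_fst

lemma measurable_upd2 (j k : Fin 3) (x : Fin 3 → ℝ) :
    Measurable (fun p : ℝ × ℝ => Function.update (Function.update x j p.1) k p.2) := by
  apply measurable_pi_lambda
  intro m
  by_cases hk : m = k
  · subst hk; simpa [Function.update_apply] using measurable_snd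
  · by_cases hj : m = j
    · subst hj; simpa [Function.update_apply, hk] using measurable_fst
    · simpa [Function.update_apply, hk, hj] using measurable_const

lemma univ_eq (hij : i ≠ j) (hjk : j ≠ k) (hik : i ≠ k) :
    (insert i (insert j ({k} : Finset (Fin 3)))) = Finset.univ := by
  apply Finset.eq_univ_iff_forall.mpr
  intro m
  rcases fin3_cover hij hjk hik m with rfl | rfl | rfl <;> simp

/-- Tonelli: integral over `nu` as iterated integral in the coordinate order i, j, k. -/
lemma fub3 (hij : i ≠ j) (hjk : j ≠ k) (hik : i ≠ k) {F : (Fin 3 → ℝ) → ℝ≥0∞}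
    (hF : Measurable F) :
    ∫⁻ x, F x ∂nu = ∫⁻ t, ∫⁻ s, ∫⁻ r, F (X i j k t s r) ∂(mu k) ∂(mu j) ∂(mu i) := by
  have hz : ∫⁻ x, F x ∂nu = (MeasureTheory.lmarginal mu Finset.univ F) (fun _ => 0) :=
    lintegral_eq_lmarginal_univ (fun _ => 0)
  rw [hz, ← univ_eq hij hjk hik]
  rw [MeasureTheory.lmarginal_insert _ hF (by simp [hij, hik])]
  apply lintegral_congr
  intro t
  rw [MeasureTheory.lmarginal_insert _ hF (by simp [hjk])]
  apply lintegral_congr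
  intro s
  rw [MeasureTheory.lmarginal_singleton]
  apply lintegral_congr
  intro r
  rw [upd3_eq hij hjk hik]

end Xsec


noncomputable def eF (u : (Fin 3 → ℝ) → ℝ) : (Fin 3 → ℝ) → ℝ≥0∞ := fun x => ENNReal.ofReal |u x|

lemma measurable_eF {u : (Fin 3 → ℝ) → ℝ} (hu : Continuous u) : Measurable (eF u) :=
  (hu.abs.measurable).ennreal_ofReal

noncomputable def D2 (j k : Fin 3) (u : (Fin 3 → ℝ) → ℝ) (x : Fin 3 → ℝ) : ℝ≥0∞ :=
  ∫⁻ s, ∫⁻ r, eF u (Function.update (Function.update x j s) k r) ^ (2:ℝ) ∂(mu k) ∂(mu j)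

lemma ennreal_alg2 (a b c d : ℝ≥0∞) :
    2 * (2 * a ^ ((1:ℝ)/2) * b ^ ((1:ℝ)/2)) ^ ((1:ℝ)/2)
      * (2 * c ^ ((1:ℝ)/2) * d ^ ((1:ℝ)/2)) ^ ((1:ℝ)/2)
    = 4 * a ^ ((1:ℝ)/4) * b ^ ((1:ℝ)/4) * c ^ ((1:ℝ)/4) * d ^ ((1:ℝ)/4) := by
  have half : (0:ℝ) ≤ 1/2 := by norm_num
  have h2 : ((2:ℝ≥0∞) ^ ((1:ℝ)/2)) * ((2:ℝ≥0∞) ^ ((1:ℝ)/2)) = 2 := by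
    rw [← ENNReal.rpow_add _ _ (by norm_num) (by norm_num)]
    norm_num
  have hq : ∀ e : ℝ≥0∞, (e ^ ((1:ℝ)/2)) ^ ((1:ℝ)/2) = e ^ ((1:ℝ)/4) := by
    intro e
    rw [← ENNReal.rpow_mul]
    norm_num
  rw [ENNReal.mul_rpow_of_nonneg _ _ half, ENNReal.mul_rpow_of_nonneg _ _ half,
    ENNReal.mul_rpow_of_nonneg _ _ half, ENNReal.mul_rpow_of_nonneg _ _ half,
    hq a, hq b, hq c, hq d]
  calc 2 * ((2:ℝ≥0∞) ^ ((1:ℝ)/2) * a ^ ((1:ℝ)/4) * b ^ ((1:ℝ)/4))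
      * ((2:ℝ≥0∞) ^ ((1:ℝ)/2) * c ^ ((1:ℝ)/4) * d ^ ((1:ℝ)/4))
      = 2 * (((2:ℝ≥0∞) ^ ((1:ℝ)/2)) * ((2:ℝ≥0∞) ^ ((1:ℝ)/2)))
        * a ^ ((1:ℝ)/4) * b ^ ((1:ℝ)/4) * c ^ ((1:ℝ)/4) * d ^ ((1:ℝ)/4) := by ring
    _ = 4 * a ^ ((1:ℝ)/4) * b ^ ((1:ℝ)/4) * c ^ ((1:ℝ)/4) * d ^ ((1:ℝ)/4) := by
        rw [h2, show (2:ℝ≥0∞) * 2 = 4 by norm_num]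

lemma agmon2_step {w : (Fin 3 → ℝ) → ℝ} (hw : ContDiff ℝ (⊤ : ℕ∞) w) (hwcs : HasCompactSupport w)
    {j k : Fin 3} (hjk : j ≠ k) (x : Fin 3 → ℝ) (hxk : x k ∈ SS k) :
    ∫⁻ s, eF w (Function.update x j s) ^ (2:ℝ) ∂(mu j) ≤
      2 * D2 j k w x ^ ((1:ℝ)/2) * D2 j k (pd k w) x ^ ((1:ℝ)/2) := by
  set A : ℝ → ℝ → ℝ≥0∞ :=
    fun s r => eF w (Function.update (Function.update x j s) k r) with hA
  set B : ℝ → ℝ → ℝ≥0∞ :=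
    fun s r => eF (pd k w) (Function.update (Function.update x j s) k r) with hB
  have hmA : Measurable (fun p : ℝ × ℝ => A p.1 p.2) :=
    (measurable_eF hw.continuous).comp (measurable_upd2 j k x)
  have hmB : Measurable (fun p : ℝ × ℝ => B p.1 p.2) :=
    (measurable_eF (pd_continuous hw k)).comp (measurable_upd2 j k x)
  have hpt : ∀ s : ℝ, eF w (Function.update x j s) ^ (2:ℝ) ≤
      ∫⁻ r, 2 * (A s r * B s r) ∂(mu k) := by
    intro s
    have hmem : (Function.update x j s) k ∈ SS k := by
      rw [Function.update_apply, if_neg (Ne.symm hjk)]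
      exact hxk
    have h := agmon1 hw hwcs k (Function.update x j s) hmem
    refine le_trans h (le_of_eq (lintegral_congr fun r => ?_))
    simp only [hA, hB]
    rw [mul_assoc]
    try rfl
  have step1 : ∫⁻ s, eF w (Function.update x j s) ^ (2:ℝ) ∂(mu j) ≤
      ∫⁻ s, ∫⁻ r, 2 * (A s r * B s r) ∂(mu k) ∂(mu j) := lintegral_mono hpt
  have hmul : Measurable (fun p : ℝ × ℝ => A p.1 p.2 * B p.1 p.2) := Measurable.mul hmA hmB
  have inner2 : ∀ s, ∫⁻ r, 2 * (A s r * B s r) ∂(mu k) = 2 * ∫⁻ r, A s r * B s r ∂(mu k) :=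
    fun s => lintegral_const_mul 2
      ((hmA.comp (measurable_prodMk_left)).mul (hmB.comp (measurable_prodMk_left)))
  have step2 : ∫⁻ s, ∫⁻ r, 2 * (A s r * B s r) ∂(mu k) ∂(mu j)
      = 2 * ∫⁻ s, ∫⁻ r, A s r * B s r ∂(mu k) ∂(mu j) := by
    rw [lintegral_congr inner2]
    exact lintegral_const_mul 2 (Measurable.lintegral_prod_right' hmul)
  have step3 := hold_iter (mu j) (mu k) hmA hmB
  have eD : (∫⁻ s, ∫⁻ r, A s r ^ (2:ℝ) ∂(mu k) ∂(mu j)) = D2 j k w x := by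
    simp only [hA]
    try rfl
  have eD' : (∫⁻ s, ∫⁻ r, B s r ^ (2:ℝ) ∂(mu k) ∂(mu j)) = D2 j k (pd k w) x := by
    simp only [hB]
    try rfl
  calc ∫⁻ s, eF w (Function.update x j s) ^ (2:ℝ) ∂(mu j)
      ≤ 2 * ∫⁻ s, ∫⁻ r, A s r * B s r ∂(mu k) ∂(mu j) := by rw [← step2]; exact step1
    _ ≤ 2 * ((∫⁻ s, ∫⁻ r, A s r ^ (2:ℝ) ∂(mu k) ∂(mu j)) ^ ((1:ℝ)/2)
        * (∫⁻ s, ∫⁻ r, B s r ^ (2:ℝ) ∂(mu k) ∂(mu j)) ^ ((1:ℝ)/2)) := by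
        exact mul_le_mul_right step3 2
    _ = 2 * D2 j k w x ^ ((1:ℝ)/2) * D2 j k (pd k w) x ^ ((1:ℝ)/2) := by
        rw [eD, eD', ← mul_assoc]

lemma agmon2 {v : (Fin 3 → ℝ) → ℝ} (hv : ContDiff ℝ (⊤ : ℕ∞) v) (hcs : HasCompactSupport v)
    {j k : Fin 3} (hjk : j ≠ k) (x : Fin 3 → ℝ) (hxj : x j ∈ SS j) (hxk : x k ∈ SS k) :
    eF v x ^ (2:ℝ) ≤ 4 * D2 j k v x ^ ((1:ℝ)/4) * D2 j k (pd k v) x ^ ((1:ℝ)/4)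
      * D2 j k (pd j v) x ^ ((1:ℝ)/4) * D2 j k (pd k (pd j v)) x ^ ((1:ℝ)/4) := by
  have h1 := agmon1 hv hcs j x hxj
  set P : ℝ → ℝ≥0∞ := fun s => eF v (Function.update x j s) with hP
  set Q : ℝ → ℝ≥0∞ := fun s => eF (pd j v) (Function.update x j s) with hQ
  have hmP : Measurable P := (measurable_eF hv.continuous).comp (measurable_update x)
  have hmQ : Measurable Q := (measurable_eF (pd_continuous hv j)).comp (measurable_update x)
  have h2 : eF v x ^ (2:ℝ) ≤ 2 * ∫⁻ s, P s * Q s ∂(mu j) := by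
    have e1 : ∀ s : ℝ, 2 * ENNReal.ofReal |v (Function.update x j s)|
        * ENNReal.ofReal |pd j v (Function.update x j s)| = 2 * (P s * Q s) := by
      intro s
      simp only [hP, hQ]
      rw [mul_assoc]
      try rfl

    have e2 : ∫⁻ s, 2 * (P s * Q s) ∂(mu j) = 2 * ∫⁻ s, P s * Q s ∂(mu j) :=
      lintegral_const_mul 2 (hmP.mul hmQ)
    calc eF v x ^ (2:ℝ) ≤ ∫⁻ s, 2 * ENNReal.ofReal |v (Function.update x j s)|
          * ENNReal.ofReal |pd j v (Function.update x j s)| ∂(mu j) := h1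
      _ = ∫⁻ s, 2 * (P s * Q s) ∂(mu j) := lintegral_congr e1
      _ = 2 * ∫⁻ s, P s * Q s ∂(mu j) := e2
  have h3 := hold (mu j) hmP hmQ
  have h4 : eF v x ^ (2:ℝ) ≤
      2 * ((∫⁻ s, P s ^ (2:ℝ) ∂(mu j)) ^ ((1:ℝ)/2) * (∫⁻ s, Q s ^ (2:ℝ) ∂(mu j)) ^ ((1:ℝ)/2)) :=
    le_trans h2 (mul_le_mul_right h3 2)
  have h5 := agmon2_step hv hcs hjk x hxk
  have h6 := agmon2_step (pd_contDiff hv j) (pd_hasCompactSupport hcs j) hjk x hxk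
  have h7 : eF v x ^ (2:ℝ) ≤
      2 * ((2 * D2 j k v x ^ ((1:ℝ)/2) * D2 j k (pd k v) x ^ ((1:ℝ)/2)) ^ ((1:ℝ)/2)
        * (2 * D2 j k (pd j v) x ^ ((1:ℝ)/2) * D2 j k (pd k (pd j v)) x ^ ((1:ℝ)/2)) ^ ((1:ℝ)/2)) := by
    refine le_trans h4 (mul_le_mul_right (mul_le_mul' ?_ ?_) 2)
    · exact ENNReal.rpow_le_rpow h5 (by norm_num)
    · exact ENNReal.rpow_le_rpow h6 (by norm_num)
  refine le_trans h7 (le_of_eq ?_)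
  rw [← mul_assoc]
  exact ennreal_alg2 _ _ _ _


lemma measurable_W (i j k : Fin 3) {u : (Fin 3 → ℝ) → ℝ} (hu : Continuous u) :
    Measurable (fun t => ∫⁻ s, ∫⁻ r, eF u (X i j k t s r) ^ (2:ℝ) ∂(mu k) ∂(mu j)) := by
  have hre : Measurable (fun p : (ℝ × ℝ) × ℝ => (p.1.1, (p.1.2, p.2)) : (ℝ×ℝ)×ℝ → ℝ×ℝ×ℝ) :=
    (measurable_fst.fst).prodMk ((measurable_fst.snd).prodMk measurable_snd)
  have h0 : Measurable (fun p : (ℝ × ℝ) × ℝ => eF u (X i j k p.1.1 p.1.2 p.2) ^ (2:ℝ)) :=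
    (((measurable_eF hu).comp ((measurable_X i j k).comp hre))).pow_const _
  have h1 : Measurable (fun q : ℝ × ℝ => ∫⁻ r, eF u (X i j k q.1 q.2 r) ^ (2:ℝ) ∂(mu k)) :=
    Measurable.lintegral_prod_right' h0
  exact Measurable.lintegral_prod_right' h1

lemma ae_SS (l : Fin 3) : ∀ᵐ t ∂(mu l), t ∈ SS l := ae_restrict_mem (measurableSet_SS l)

lemma W_eq_I {i j k : Fin 3} (hij : i ≠ j) (hjk : j ≠ k) (hik : i ≠ k)
    {u : (Fin 3 → ℝ) → ℝ} (hu : Continuous u) :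
    ∫⁻ t, (∫⁻ s, ∫⁻ r, eF u (X i j k t s r) ^ (2:ℝ) ∂(mu k) ∂(mu j)) ∂(mu i)
      = ∫⁻ x, eF u x ^ (2:ℝ) ∂nu :=
  (fub3 hij hjk hik ((measurable_eF hu).pow_const _)).symm

lemma main_chain {i j k : Fin 3} (hij : i ≠ j) (hjk : j ≠ k) (hik : i ≠ k)
    {f g h : (Fin 3 → ℝ) → ℝ}
    (hf : ContDiff ℝ (⊤ : ℕ∞) f) (hf' : HasCompactSupport f)
    (hg : ContDiff ℝ (⊤ : ℕ∞) g) (hg' : HasCompactSupport g)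
    (hh : ContDiff ℝ (⊤ : ℕ∞) h) (hh' : HasCompactSupport h) :
    ∫⁻ x, eF f x * (eF g x * eF h x) ∂nu ≤
      (∫⁻ x, eF f x ^ (2:ℝ) ∂nu) ^ ((1:ℝ)/2)
      * (8 * ((∫⁻ x, eF g x ^ (2:ℝ) ∂nu) ^ ((1:ℝ)/2)
              * (∫⁻ x, eF (pd i g) x ^ (2:ℝ) ∂nu) ^ ((1:ℝ)/2))
          * ((∫⁻ x, eF h x ^ (2:ℝ) ∂nu) ^ ((1:ℝ)/4)
              * (∫⁻ x, eF (pd k h) x ^ (2:ℝ) ∂nu) ^ ((1:ℝ)/4)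
              * (∫⁻ x, eF (pd j h) x ^ (2:ℝ) ∂nu) ^ ((1:ℝ)/4)
              * (∫⁻ x, eF (pd k (pd j h)) x ^ (2:ℝ) ∂nu) ^ ((1:ℝ)/4))) ^ ((1:ℝ)/2) := by
  have mf := measurable_eF hf.continuous
  have mg := measurable_eF hg.continuous
  have mgi := measurable_eF (pd_continuous hg i)
  have mh := measurable_eF hh.continuous
  set Ig := ∫⁻ x, eF g x ^ (2:ℝ) ∂nu with hIg
  set Igi := ∫⁻ x, eF (pd i g) x ^ (2:ℝ) ∂nu with hIgi
  set Ih := ∫⁻ x, eF h x ^ (2:ℝ) ∂nu with hIh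
  set Ihk := ∫⁻ x, eF (pd k h) x ^ (2:ℝ) ∂nu with hIhk
  set Ihj := ∫⁻ x, eF (pd j h) x ^ (2:ℝ) ∂nu with hIhj
  set Ihjk := ∫⁻ x, eF (pd k (pd j h)) x ^ (2:ℝ) ∂nu with hIhjk
  -- Step 1 : Cauchy-Schwarz on nu
  have step1 : ∫⁻ x, eF f x * (eF g x * eF h x) ∂nu ≤
      (∫⁻ x, eF f x ^ (2:ℝ) ∂nu) ^ ((1:ℝ)/2)
        * (∫⁻ x, (eF g x * eF h x) ^ (2:ℝ) ∂nu) ^ ((1:ℝ)/2) :=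
    hold nu mf (mg.mul mh)
  -- rewrite the square of the product
  have hsq : ∫⁻ x, (eF g x * eF h x) ^ (2:ℝ) ∂nu
      = ∫⁻ x, eF g x ^ (2:ℝ) * eF h x ^ (2:ℝ) ∂nu :=
    lintegral_congr (fun x => ENNReal.mul_rpow_of_nonneg _ _ (by norm_num))
  -- the main estimate on J
  set W : ((Fin 3 → ℝ) → ℝ) → ℝ → ℝ≥0∞ :=
    fun u t => ∫⁻ s, ∫⁻ r, eF u (X i j k t s r) ^ (2:ℝ) ∂(mu k) ∂(mu j) with hW
  have hmeasF : Measurable (fun x => eF g x ^ (2:ℝ) * eF h x ^ (2:ℝ)) :=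
    (mg.pow_const _).mul (mh.pow_const _)
  -- the inner bound on the g-part, valid for t ∈ SS i
  have hGb : ∀ t : ℝ, t ∈ SS i →
      (∫⁻ s, ∫⁻ r, eF g (X i j k t s r) ^ (2:ℝ) ∂(mu k) ∂(mu j)) ≤
        2 * (Ig ^ ((1:ℝ)/2) * Igi ^ ((1:ℝ)/2)) := by
    intro t ht
    have hpt : ∀ s r : ℝ, eF g (X i j k t s r) ^ (2:ℝ) ≤
        ∫⁻ t', 2 * (eF g (X i j k t' s r) * eF (pd i g) (X i j k t' s r)) ∂(mu i) := by
      intro s r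
      have hti : (X i j k t s r) i ∈ SS i := by rw [X_apply_i hij hik]; exact ht
      refine le_trans (agmon1 hg hg' i _ hti) (le_of_eq (lintegral_congr fun t' => ?_))
      rw [updX_i hij hjk hik, mul_assoc]
      try rfl
    have hmono : (∫⁻ s, ∫⁻ r, eF g (X i j k t s r) ^ (2:ℝ) ∂(mu k) ∂(mu j)) ≤
        ∫⁻ s, ∫⁻ r, ∫⁻ t', 2 * (eF g (X i j k t' s r)
          * eF (pd i g) (X i j k t' s r)) ∂(mu i) ∂(mu k) ∂(mu j) :=
      lintegral_mono fun s => lintegral_mono fun r => hpt s r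
    have hmeas2 : Measurable (fun x => 2 * (eF g x * eF (pd i g) x)) :=
      (measurable_const.mul (mg.mul mgi))
    have hperm : (∫⁻ s, ∫⁻ r, ∫⁻ t', 2 * (eF g (X i j k t' s r)
          * eF (pd i g) (X i j k t' s r)) ∂(mu i) ∂(mu k) ∂(mu j))
        = ∫⁻ x, 2 * (eF g x * eF (pd i g) x) ∂nu := by
      rw [fub3 hjk (Ne.symm hik) (Ne.symm hij) hmeas2]
      apply lintegral_congr; intro s
      apply lintegral_congr; intro r
      apply lintegral_congr; intro t'
      rw [Xperm hij hjk hik]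
    have hfin : ∫⁻ x, 2 * (eF g x * eF (pd i g) x) ∂nu
        = 2 * ∫⁻ x, eF g x * eF (pd i g) x ∂nu := lintegral_const_mul 2 (mg.mul mgi)
    calc (∫⁻ s, ∫⁻ r, eF g (X i j k t s r) ^ (2:ℝ) ∂(mu k) ∂(mu j))
        ≤ ∫⁻ x, 2 * (eF g x * eF (pd i g) x) ∂nu := by rw [← hperm]; exact hmono
      _ = 2 * ∫⁻ x, eF g x * eF (pd i g) x ∂nu := hfin
      _ ≤ 2 * (Ig ^ ((1:ℝ)/2) * Igi ^ ((1:ℝ)/2)) :=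
          mul_le_mul_right (hold nu mg mgi) 2
  -- measurable W's
  have mWh := measurable_W i j k hh.continuous
  have mWhk := measurable_W i j k (pd_continuous hh k)
  have mWhj := measurable_W i j k (pd_continuous hh j)
  have mWhjk := measurable_W i j k (pd_continuous (pd_contDiff hh j) k)
  have mWg := measurable_W i j k hg.continuous
  -- main J bound
  have hJ : ∫⁻ x, eF g x ^ (2:ℝ) * eF h x ^ (2:ℝ) ∂nu ≤
      8 * (Ig ^ ((1:ℝ)/2) * Igi ^ ((1:ℝ)/2))
        * (Ih ^ ((1:ℝ)/4) * Ihk ^ ((1:ℝ)/4) * Ihj ^ ((1:ℝ)/4) * Ihjk ^ ((1:ℝ)/4)) := by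
    rw [fub3 hij hjk hik hmeasF]
    have inner_bd : ∀ᵐ t ∂(mu i),
        (∫⁻ s, ∫⁻ r, eF g (X i j k t s r) ^ (2:ℝ) * eF h (X i j k t s r) ^ (2:ℝ)
            ∂(mu k) ∂(mu j)) ≤
        (4 * W h t ^ ((1:ℝ)/4) * W (pd k h) t ^ ((1:ℝ)/4) * W (pd j h) t ^ ((1:ℝ)/4)
            * W (pd k (pd j h)) t ^ ((1:ℝ)/4)) * (2 * (Ig ^ ((1:ℝ)/2) * Igi ^ ((1:ℝ)/2))) := by
      filter_upwards [ae_SS i] with t ht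
      set Phi : ℝ≥0∞ := 4 * W h t ^ ((1:ℝ)/4) * W (pd k h) t ^ ((1:ℝ)/4)
          * W (pd j h) t ^ ((1:ℝ)/4) * W (pd k (pd j h)) t ^ ((1:ℝ)/4) with hPhi
      have hptae : ∀ᵐ s ∂(mu j), (∫⁻ r, eF g (X i j k t s r) ^ (2:ℝ)
            * eF h (X i j k t s r) ^ (2:ℝ) ∂(mu k)) ≤
          ∫⁻ r, eF g (X i j k t s r) ^ (2:ℝ) * Phi ∂(mu k) := by
        filter_upwards [ae_SS j] with s hs
        apply lintegral_mono_ae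
        filter_upwards [ae_SS k] with r hr
        have hxj : (X i j k t s r) j ∈ SS j := by rw [X_apply_j hjk]; exact hs
        have hxk : (X i j k t s r) k ∈ SS k := by rw [X_apply_k hjk]; exact hr
        have h2d := agmon2 hh hh' hjk (X i j k t s r) hxj hxk
        have hD2W : ∀ u : (Fin 3 → ℝ) → ℝ, D2 j k u (X i j k t s r) = W u t := by
          intro u
          show _ = ∫⁻ s', ∫⁻ r', eF u (X i j k t s' r') ^ (2:ℝ) ∂(mu k) ∂(mu j)
          rw [D2]
          apply lintegral_congr; intro s'
          apply lintegral_congr; intro r'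
          rw [updX_jk hij hjk hik]
        rw [hD2W h, hD2W (pd k h), hD2W (pd j h), hD2W (pd k (pd j h))] at h2d
        exact mul_le_mul_right h2d _
      have hmeas_gX : Measurable (fun p : ℝ × ℝ =>
          eF g (X i j k t p.1 p.2) ^ (2:ℝ)) := by
        have hre : Measurable (fun p : ℝ × ℝ => (t, (p.1, p.2)) : ℝ×ℝ → ℝ×ℝ×ℝ) :=
          measurable_const.prodMk (measurable_fst.prodMk measurable_snd)
        exact ((mg.comp ((measurable_X i j k).comp hre))).pow_const _
      calc (∫⁻ s, ∫⁻ r, eF g (X i j k t s r) ^ (2:ℝ) * eF h (X i j k t s r) ^ (2:ℝ)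
              ∂(mu k) ∂(mu j))
          ≤ ∫⁻ s, ∫⁻ r, eF g (X i j k t s r) ^ (2:ℝ) * Phi ∂(mu k) ∂(mu j) :=
            lintegral_mono_ae hptae
        _ = (∫⁻ s, ∫⁻ r, eF g (X i j k t s r) ^ (2:ℝ) ∂(mu k) ∂(mu j)) * Phi := by
            rw [← lintegral_mul_const Phi (Measurable.lintegral_prod_right' hmeas_gX)]
            apply lintegral_congr; intro s
            exact lintegral_mul_const Phi (hmeas_gX.comp (measurable_prodMk_left))
        _ ≤ (2 * (Ig ^ ((1:ℝ)/2) * Igi ^ ((1:ℝ)/2))) * Phi :=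
            mul_le_mul_left (hGb t ht) Phi
        _ = Phi * (2 * (Ig ^ ((1:ℝ)/2) * Igi ^ ((1:ℝ)/2))) := mul_comm _ _
    have hPhiMeas : Measurable (fun t => 4 * W h t ^ ((1:ℝ)/4) * W (pd k h) t ^ ((1:ℝ)/4)
        * W (pd j h) t ^ ((1:ℝ)/4) * W (pd k (pd j h)) t ^ ((1:ℝ)/4)) := by
      apply Measurable.mul
      apply Measurable.mul
      apply Measurable.mul
      · exact measurable_const.mul (mWh.pow_const _)
      · exact mWhk.pow_const _
      · exact mWhj.pow_const _
      · exact mWhjk.pow_const _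
    have hint4 : ∫⁻ t, (4 * W h t ^ ((1:ℝ)/4) * W (pd k h) t ^ ((1:ℝ)/4)
          * W (pd j h) t ^ ((1:ℝ)/4) * W (pd k (pd j h)) t ^ ((1:ℝ)/4)) ∂(mu i) ≤
        4 * (Ih ^ ((1:ℝ)/4) * Ihk ^ ((1:ℝ)/4) * Ihj ^ ((1:ℝ)/4) * Ihjk ^ ((1:ℝ)/4)) := by
      have e1 : ∀ t : ℝ, 4 * W h t ^ ((1:ℝ)/4) * W (pd k h) t ^ ((1:ℝ)/4)
          * W (pd j h) t ^ ((1:ℝ)/4) * W (pd k (pd j h)) t ^ ((1:ℝ)/4)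
          = 4 * (W h t ^ ((1:ℝ)/4) * W (pd k h) t ^ ((1:ℝ)/4)
            * W (pd j h) t ^ ((1:ℝ)/4) * W (pd k (pd j h)) t ^ ((1:ℝ)/4)) := by
        intro t; ring
      rw [lintegral_congr e1, lintegral_const_mul 4 (by
        apply Measurable.mul
        apply Measurable.mul
        apply Measurable.mul
        · exact mWh.pow_const _
        · exact mWhk.pow_const _
        · exact mWhj.pow_const _
        · exact mWhjk.pow_const _)]
      have h4 := hold4 (mu i) mWh mWhk mWhj mWhjk
      rw [W_eq_I hij hjk hik hh.continuous, W_eq_I hij hjk hik (pd_continuous hh k),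
        W_eq_I hij hjk hik (pd_continuous hh j),
        W_eq_I hij hjk hik (pd_continuous (pd_contDiff hh j) k),
        ← hIh, ← hIhk, ← hIhj, ← hIhjk] at h4
      exact mul_le_mul_right h4 4
    calc ∫⁻ t, (∫⁻ s, ∫⁻ r, eF g (X i j k t s r) ^ (2:ℝ)
            * eF h (X i j k t s r) ^ (2:ℝ) ∂(mu k) ∂(mu j)) ∂(mu i)
        ≤ ∫⁻ t, (4 * W h t ^ ((1:ℝ)/4) * W (pd k h) t ^ ((1:ℝ)/4)
            * W (pd j h) t ^ ((1:ℝ)/4) * W (pd k (pd j h)) t ^ ((1:ℝ)/4))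
            * (2 * (Ig ^ ((1:ℝ)/2) * Igi ^ ((1:ℝ)/2))) ∂(mu i) := lintegral_mono_ae inner_bd
      _ = (∫⁻ t, (4 * W h t ^ ((1:ℝ)/4) * W (pd k h) t ^ ((1:ℝ)/4)
            * W (pd j h) t ^ ((1:ℝ)/4) * W (pd k (pd j h)) t ^ ((1:ℝ)/4)) ∂(mu i))
            * (2 * (Ig ^ ((1:ℝ)/2) * Igi ^ ((1:ℝ)/2))) :=
          lintegral_mul_const _ hPhiMeas
      _ ≤ (4 * (Ih ^ ((1:ℝ)/4) * Ihk ^ ((1:ℝ)/4) * Ihj ^ ((1:ℝ)/4) * Ihjk ^ ((1:ℝ)/4)))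
            * (2 * (Ig ^ ((1:ℝ)/2) * Igi ^ ((1:ℝ)/2))) := mul_le_mul_left hint4 _
      _ = 8 * (Ig ^ ((1:ℝ)/2) * Igi ^ ((1:ℝ)/2))
            * (Ih ^ ((1:ℝ)/4) * Ihk ^ ((1:ℝ)/4) * Ihj ^ ((1:ℝ)/4) * Ihjk ^ ((1:ℝ)/4)) := by
          rw [show (8:ℝ≥0∞) = 4 * 2 by norm_num]
          ring
  refine le_trans step1 (mul_le_mul_right ?_ _)
  refine ENNReal.rpow_le_rpow ?_ (by norm_num)
  rw [hsq]
  exact hJ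


lemma eF_sq (u : (Fin 3 → ℝ) → ℝ) (x : Fin 3 → ℝ) :
    eF u x ^ (2:ℝ) = ENNReal.ofReal (u x ^ 2) := by
  show ENNReal.ofReal |u x| ^ (2:ℝ) = _
  rw [ENNReal.ofReal_rpow_of_nonneg (abs_nonneg _) (by norm_num)]
  congr 1
  rw [show (2:ℝ) = ((2:ℕ):ℝ) by norm_num, Real.rpow_natCast, sq_abs]

lemma I_fin {u : (Fin 3 → ℝ) → ℝ} (hu : Continuous u) (hcs : HasCompactSupport u) :
    (∫⁻ x, eF u x ^ (2:ℝ) ∂nu) ≠ ⊤ := by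
  have hsupp : HasCompactSupport (fun x => u x ^ 2) := by
    have h1 : HasCompactSupport (fun x => u x * u x) := hcs.mul_right
    have he : (fun x => u x ^ 2) = fun x => u x * u x := by funext x; ring
    rw [he]; exact h1
  have hint : Integrable (fun x => u x ^ 2) nu := by
    rw [← nu_eq]
    exact ((hu.pow 2).integrable_of_hasCompactSupport hsupp).restrict
  have hb : ∫⁻ x, eF u x ^ (2:ℝ) ∂nu ≤ ∫⁻ x, (‖u x ^ 2‖₊ : ℝ≥0∞) ∂nu := by
    apply lintegral_mono
    intro x
    dsimp only
    rw [eF_sq]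
    exact Real.ofReal_le_enorm _
  exact ne_top_of_le_ne_top hint.2.ne hb

lemma I_eq {u : (Fin 3 → ℝ) → ℝ} (hu : Continuous u) :
    ∫ x in H3, u x ^ 2 = (∫⁻ x, eF u x ^ (2:ℝ) ∂nu).toReal := by
  rw [show (volume : Measure (Fin 3 → ℝ)).restrict H3 = nu from nu_eq,
    integral_eq_lintegral_of_nonneg_ae (Filter.Eventually.of_forall fun x => sq_nonneg (u x))
      ((hu.pow 2).aestronglyMeasurable)]
  congr 1
  exact lintegral_congr fun x => (eF_sq u x).symm

lemma q1 (x : ℝ) (hx : 0 ≤ x) : (x ^ ((1:ℝ)/2)) ^ ((1:ℝ)/2) = x ^ ((1:ℝ)/4) := by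
  rw [← Real.rpow_mul hx]; norm_num

lemma q2 (x : ℝ) (hx : 0 ≤ x) : (x ^ ((1:ℝ)/4)) ^ ((1:ℝ)/2) = x ^ ((1:ℝ)/8) := by
  rw [← Real.rpow_mul hx]; norm_num

lemma real_expand {a b c d e f' : ℝ} (ha : 0 ≤ a) (hb : 0 ≤ b) (hc : 0 ≤ c) (hd : 0 ≤ d)
    (he : 0 ≤ e) (hf : 0 ≤ f') :
    (8 * (a ^ ((1:ℝ)/2) * b ^ ((1:ℝ)/2))
      * (c ^ ((1:ℝ)/4) * d ^ ((1:ℝ)/4) * e ^ ((1:ℝ)/4) * f' ^ ((1:ℝ)/4))) ^ ((1:ℝ)/2)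
    = (8:ℝ) ^ ((1:ℝ)/2) * (a ^ ((1:ℝ)/4) * b ^ ((1:ℝ)/4)
      * (c ^ ((1:ℝ)/8) * d ^ ((1:ℝ)/8) * e ^ ((1:ℝ)/8) * f' ^ ((1:ℝ)/8))) := by
  rw [Real.mul_rpow (by positivity) (by positivity),
    Real.mul_rpow (by positivity) (by positivity),
    Real.mul_rpow (by positivity) (by positivity),
    Real.mul_rpow (by positivity) (by positivity),
    Real.mul_rpow (by positivity) (by positivity),
    Real.mul_rpow (by positivity) (by positivity),
    q1 a ha, q1 b hb, q2 c hc, q2 d hd, q2 e he, q2 f' hf]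
  ring

lemma sqrt8_le_3 : (8:ℝ) ^ ((1:ℝ)/2) ≤ 3 := by
  have h1 : ((8:ℝ)) ^ ((1:ℝ)/2) ≤ ((9:ℝ)) ^ ((1:ℝ)/2) :=
    Real.rpow_le_rpow (by norm_num) (by norm_num) (by norm_num)
  have h9 : ((9:ℝ)) ^ ((1:ℝ)/2) = 3 := by
    rw [show (9:ℝ) = 3 ^ (2:ℕ) by norm_num, ← Real.rpow_natCast 3 2,
      ← Real.rpow_mul (by norm_num)]
    norm_num
  linarith

end AnisoAux

open AnisoAux ENNReal in
/-- Anisotropic trilinear Sobolev inequality with pairwise distinct directions. -/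
theorem anisotropic_trilinear_distinct :
    ∃ C : ℝ, 0 < C ∧ ∀ i j k : Fin 3, i ≠ j → j ≠ k → i ≠ k →
      ∀ f g h : (Fin 3 → ℝ) → ℝ,
      ContDiff ℝ (⊤ : ℕ∞) f → HasCompactSupport f →
      ContDiff ℝ (⊤ : ℕ∞) g → HasCompactSupport g →
      ContDiff ℝ (⊤ : ℕ∞) h → HasCompactSupport h →
      (∫ x in H3, |f x * g x * h x|) ≤
        C * L2 f * L2 g ^ ((1:ℝ)/2) * L2 (pd i g) ^ ((1:ℝ)/2)
          * L2 h ^ ((1:ℝ)/4) * L2 (pd j h) ^ ((1:ℝ)/4)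
          * L2 (pd k h) ^ ((1:ℝ)/4) * L2 (pd j (pd k h)) ^ ((1:ℝ)/4) := by
  refine ⟨3, by norm_num, ?_⟩
  intro i j k hij hjk hik f g h hf hf' hg hg' hh hh'
  have key := main_chain hij hjk hik hf hf' hg hg' hh hh'
  set If := ∫⁻ x, eF f x ^ (2:ℝ) ∂nu with hIf
  set Ig := ∫⁻ x, eF g x ^ (2:ℝ) ∂nu with hIg
  set Igi := ∫⁻ x, eF (pd i g) x ^ (2:ℝ) ∂nu with hIgi
  set Ih := ∫⁻ x, eF h x ^ (2:ℝ) ∂nu with hIh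
  set Ihk := ∫⁻ x, eF (pd k h) x ^ (2:ℝ) ∂nu with hIhk
  set Ihj := ∫⁻ x, eF (pd j h) x ^ (2:ℝ) ∂nu with hIhj
  set Ihjk := ∫⁻ x, eF (pd k (pd j h)) x ^ (2:ℝ) ∂nu with hIhjk
  -- finiteness
  have fIf : If ≠ ⊤ := I_fin hf.continuous hf'
  have fIg : Ig ≠ ⊤ := I_fin hg.continuous hg'
  have fIgi : Igi ≠ ⊤ := I_fin (pd_continuous hg i) (pd_hasCompactSupport hg' i)
  have fIh : Ih ≠ ⊤ := I_fin hh.continuous hh'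
  have fIhk : Ihk ≠ ⊤ := I_fin (pd_continuous hh k) (pd_hasCompactSupport hh' k)
  have fIhj : Ihj ≠ ⊤ := I_fin (pd_continuous hh j) (pd_hasCompactSupport hh' j)
  have fIhjk : Ihjk ≠ ⊤ := I_fin (pd_continuous (pd_contDiff hh j) k)
    (pd_hasCompactSupport (pd_hasCompactSupport hh' j) k)
  have half : (0:ℝ) ≤ 1/2 := by norm_num
  have quarter : (0:ℝ) ≤ 1/4 := by norm_num
  set RHSenn : ℝ≥0∞ := If ^ ((1:ℝ)/2)
      * (8 * (Ig ^ ((1:ℝ)/2) * Igi ^ ((1:ℝ)/2))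
          * (Ih ^ ((1:ℝ)/4) * Ihk ^ ((1:ℝ)/4) * Ihj ^ ((1:ℝ)/4) * Ihjk ^ ((1:ℝ)/4))) ^ ((1:ℝ)/2)
      with hRHSenn
  have hne : RHSenn ≠ ⊤ := by
    rw [hRHSenn]
    apply ENNReal.mul_ne_top (ENNReal.rpow_ne_top_of_nonneg half fIf)
    apply ENNReal.rpow_ne_top_of_nonneg half
    apply ENNReal.mul_ne_top
    apply ENNReal.mul_ne_top (by simp)
    · exact ENNReal.mul_ne_top (ENNReal.rpow_ne_top_of_nonneg half fIg)
        (ENNReal.rpow_ne_top_of_nonneg half fIgi)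
    · exact ENNReal.mul_ne_top (ENNReal.mul_ne_top (ENNReal.mul_ne_top
        (ENNReal.rpow_ne_top_of_nonneg quarter fIh)
        (ENNReal.rpow_ne_top_of_nonneg quarter fIhk))
        (ENNReal.rpow_ne_top_of_nonneg quarter fIhj))
        (ENNReal.rpow_ne_top_of_nonneg quarter fIhjk)
  -- LHS conversion
  have eLHS : ∫ x in H3, |f x * g x * h x|
      = (∫⁻ x, eF f x * (eF g x * eF h x) ∂nu).toReal := by
    rw [show (volume : Measure (Fin 3 → ℝ)).restrict H3 = nu from nu_eq,
      integral_eq_lintegral_of_nonneg_ae (f := fun x => |f x * g x * h x|) (Filter.Eventually.of_forall fun x => abs_nonneg _)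
        (((hf.continuous.mul hg.continuous).mul hh.continuous).abs.aestronglyMeasurable)]
    congr 1
    apply lintegral_congr
    intro x
    rw [abs_mul, abs_mul, ENNReal.ofReal_mul (by positivity), ENNReal.ofReal_mul (abs_nonneg _)]
    show ENNReal.ofReal |f x| * ENNReal.ofReal |g x| * ENNReal.ofReal |h x|
      = ENNReal.ofReal |f x| * (ENNReal.ofReal |g x| * ENNReal.ofReal |h x|)
    ring
  have hle : ∫ x in H3, |f x * g x * h x| ≤ RHSenn.toReal := by
    rw [eLHS]
    exact ENNReal.toReal_mono hne key
  -- toReal of the RHS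
  have hTR : RHSenn.toReal = If.toReal ^ ((1:ℝ)/2)
      * (8 * (Ig.toReal ^ ((1:ℝ)/2) * Igi.toReal ^ ((1:ℝ)/2))
          * (Ih.toReal ^ ((1:ℝ)/4) * Ihk.toReal ^ ((1:ℝ)/4) * Ihj.toReal ^ ((1:ℝ)/4)
            * Ihjk.toReal ^ ((1:ℝ)/4))) ^ ((1:ℝ)/2) := by
    rw [hRHSenn]
    simp only [ENNReal.toReal_mul, ← ENNReal.toReal_rpow, ENNReal.toReal_ofNat]
  -- L2 conversions
  have eLf : L2 f = If.toReal ^ ((1:ℝ)/2) := by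
    rw [L2, I_eq hf.continuous, Real.sqrt_eq_rpow]
  have eLg : L2 g ^ ((1:ℝ)/2) = Ig.toReal ^ ((1:ℝ)/4) := by
    rw [L2, I_eq hg.continuous, Real.sqrt_eq_rpow, q1 _ ENNReal.toReal_nonneg]
  have eLgi : L2 (pd i g) ^ ((1:ℝ)/2) = Igi.toReal ^ ((1:ℝ)/4) := by
    rw [L2, I_eq (pd_continuous hg i), Real.sqrt_eq_rpow, q1 _ ENNReal.toReal_nonneg]
  have eLh : L2 h ^ ((1:ℝ)/4) = Ih.toReal ^ ((1:ℝ)/8) := by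
    rw [L2, I_eq hh.continuous, Real.sqrt_eq_rpow, ← Real.rpow_mul ENNReal.toReal_nonneg]
    norm_num [hIh]
  have eLhj : L2 (pd j h) ^ ((1:ℝ)/4) = Ihj.toReal ^ ((1:ℝ)/8) := by
    rw [L2, I_eq (pd_continuous hh j), Real.sqrt_eq_rpow,
      ← Real.rpow_mul ENNReal.toReal_nonneg]
    norm_num [hIhj]
  have eLhk : L2 (pd k h) ^ ((1:ℝ)/4) = Ihk.toReal ^ ((1:ℝ)/8) := by
    rw [L2, I_eq (pd_continuous hh k), Real.sqrt_eq_rpow,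
      ← Real.rpow_mul ENNReal.toReal_nonneg]
    norm_num [hIhk]
  have eLhjk : L2 (pd j (pd k h)) ^ ((1:ℝ)/4) = Ihjk.toReal ^ ((1:ℝ)/8) := by
    rw [pd_comm hh j k, L2, I_eq (pd_continuous (pd_contDiff hh j) k), Real.sqrt_eq_rpow,
      ← Real.rpow_mul ENNReal.toReal_nonneg]
    norm_num [hIhjk]
  -- final real algebra
  have hq2 : ∀ x : ℝ≥0∞, (x.toReal ^ ((1:ℝ)/4)) ^ ((1:ℝ)/2) = x.toReal ^ ((1:ℝ)/8) :=
    fun x => q2 _ ENNReal.toReal_nonneg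
  calc ∫ x in H3, |f x * g x * h x| ≤ RHSenn.toReal := hle
    _ = If.toReal ^ ((1:ℝ)/2)
      * ((8:ℝ) ^ ((1:ℝ)/2) * (Ig.toReal ^ ((1:ℝ)/4) * Igi.toReal ^ ((1:ℝ)/4)
          * (Ih.toReal ^ ((1:ℝ)/8) * Ihk.toReal ^ ((1:ℝ)/8) * Ihj.toReal ^ ((1:ℝ)/8)
            * Ihjk.toReal ^ ((1:ℝ)/8)))) := by
        rw [hTR, real_expand ENNReal.toReal_nonneg ENNReal.toReal_nonneg ENNReal.toReal_nonneg
          ENNReal.toReal_nonneg ENNReal.toReal_nonneg ENNReal.toReal_nonneg]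
    _ = (8:ℝ) ^ ((1:ℝ)/2) * (If.toReal ^ ((1:ℝ)/2) * Ig.toReal ^ ((1:ℝ)/4)
          * Igi.toReal ^ ((1:ℝ)/4) * Ih.toReal ^ ((1:ℝ)/8) * Ihj.toReal ^ ((1:ℝ)/8)
          * Ihk.toReal ^ ((1:ℝ)/8) * Ihjk.toReal ^ ((1:ℝ)/8)) := by ring
    _ ≤ 3 * (If.toReal ^ ((1:ℝ)/2) * Ig.toReal ^ ((1:ℝ)/4)
          * Igi.toReal ^ ((1:ℝ)/4) * Ih.toReal ^ ((1:ℝ)/8) * Ihj.toReal ^ ((1:ℝ)/8)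
          * Ihk.toReal ^ ((1:ℝ)/8) * Ihjk.toReal ^ ((1:ℝ)/8)) := by
        apply mul_le_mul_of_nonneg_right sqrt8_le_3
        positivity
    _ = 3 * L2 f * L2 g ^ ((1:ℝ)/2) * L2 (pd i g) ^ ((1:ℝ)/2)
          * L2 h ^ ((1:ℝ)/4) * L2 (pd j h) ^ ((1:ℝ)/4)
          * L2 (pd k h) ^ ((1:ℝ)/4) * L2 (pd j (pd k h)) ^ ((1:ℝ)/4) := by
        rw [eLf, eLg, eLgi, eLh, eLhj, eLhk, eLhjk]
        ring
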